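/- The ICTL formula ψ ∨ (φ ∧ AX A(φ U ψ)) → A(φ U ψ) is valid in every birelational model (where → is intuitionistic implication). -/
import Mathlib


/-- A birelational frame: a nonempty countable set of worlds with a preorder `P`
(the intuitionistic/knowledge order), a serial relation `R` (the temporal
transition relation), satisfying the confluence conditions C1 and C2. -/
structure BiFrame (W : Type) where
  nonempty : Nonempty W
  countable : Countable W
  P : W → W → Prop
  R : W → W → Prop
  P_refl : ∀ x, P x x
  P_trans : ∀ x y z, P x y → P y z → P x z
  R_serial : ∀ x, ∃ y, R x y
  C1 : ∀ x y z, R x y → P y z → ∃ u, P x u ∧ R u z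
  C2 : ∀ x y z, P x z → R x y → ∃ u, P y u ∧ R z u

/-- A path: an infinite `R`-sequence of worlds. -/
def BiFrame.IsPath {W : Type} (F : BiFrame W) (ρ : ℕ → W) : Prop :=
  ∀ i : ℕ, F.R (ρ i) (ρ (i + 1))

/-- A birelational model: a birelational frame with a P-monotone valuation. -/
structure BiModel (W : Type) (Atom : Type) extends BiFrame W where
  V : W → Set Atom
  V_mono : ∀ w w', P w w' → V w ⊆ V w'

/-- Formulae of Intuitionistic Computation Tree Logic. -/
inductive ICTL (Atom : Type) : Type where
  | atom : Atom → ICTL Atom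
  | bot  : ICTL Atom
  | and  : ICTL Atom → ICTL Atom → ICTL Atom
  | or   : ICTL Atom → ICTL Atom → ICTL Atom
  | impl : ICTL Atom → ICTL Atom → ICTL Atom
  | EX   : ICTL Atom → ICTL Atom
  | EU   : ICTL Atom → ICTL Atom → ICTL Atom
  | ER   : ICTL Atom → ICTL Atom → ICTL Atom
  | AX   : ICTL Atom → ICTL Atom
  | AU   : ICTL Atom → ICTL Atom → ICTL Atom
  | AR   : ICTL Atom → ICTL Atom → ICTL Atom

/-- Intuitionistic negation. -/
def ICTL.neg {Atom : Type} (φ : ICTL Atom) : ICTL Atom := ICTL.impl φ ICTL.bot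

/-- The ICTL satisfaction relation on birelational models. -/
def Sat {W Atom : Type} (M : BiModel W Atom) : ICTL Atom → W → Prop
  | .atom p, w => p ∈ M.V w
  | .bot, _ => False
  | .and φ ψ, w => Sat M φ w ∧ Sat M ψ w
  | .or φ ψ, w => Sat M φ w ∨ Sat M ψ w
  | .impl φ ψ, w => ∀ w', M.P w w' → Sat M φ w' → Sat M ψ w'
  | .EX φ, w => ∃ ρ : ℕ → W, M.toBiFrame.IsPath ρ ∧ ρ 0 = w ∧ Sat M φ (ρ 1)
  | .EU φ ψ, w => ∃ ρ : ℕ → W, M.toBiFrame.IsPath ρ ∧ ρ 0 = w ∧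
      ∃ j : ℕ, Sat M ψ (ρ j) ∧ ∀ i < j, Sat M φ (ρ i)
  | .ER φ ψ, w => ∃ ρ : ℕ → W, M.toBiFrame.IsPath ρ ∧ ρ 0 = w ∧
      ((∀ i : ℕ, Sat M ψ (ρ i)) ∨ ∃ j : ℕ, Sat M φ (ρ j) ∧ ∀ i ≤ j, Sat M ψ (ρ i))
  | .AX φ, w => ∀ w', M.P w w' → ∀ ρ : ℕ → W, M.toBiFrame.IsPath ρ → ρ 0 = w' →
      Sat M φ (ρ 1)
  | .AU φ ψ, w => ∀ w', M.P w w' → ∀ ρ : ℕ → W, M.toBiFrame.IsPath ρ → ρ 0 = w' →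
      ∃ j : ℕ, Sat M ψ (ρ j) ∧ ∀ i < j, Sat M φ (ρ i)
  | .AR φ ψ, w => ∀ w', M.P w w' → ∀ ρ : ℕ → W, M.toBiFrame.IsPath ρ → ρ 0 = w' →
      ((∀ i : ℕ, Sat M ψ (ρ i)) ∨ ∃ j : ℕ, Sat M φ (ρ j) ∧ ∀ i ≤ j, Sat M ψ (ρ i))

/-- The satisfaction set ⟦φ⟧ of a formula. -/
def sem {W Atom : Type} (M : BiModel W Atom) (φ : ICTL Atom) : Set W :=
  {w | Sat M φ w}

/-- `upset M Y = Y↑`: the worlds all of whose `P`-successors lie in `Y`. -/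
def upset {W Atom : Type} (M : BiModel W Atom) (Y : Set W) : Set W :=
  {w | ∀ w', M.P w w' → w' ∈ Y}

/-- Existential predecessors. -/
def preE {W Atom : Type} (M : BiModel W Atom) (X : Set W) : Set W :=
  {w' | ∃ w ∈ X, M.R w' w}

/-- Universal predecessors. -/
def preA {W Atom : Type} (M : BiModel W Atom) (X : Set W) : Set W :=
  {w' | ∀ w, M.R w' w → w ∈ X}


noncomputable def liftAux {W : Type} (F : BiFrame W) (ρ : ℕ → W) (h : F.IsPath ρ)
    (w' : W) (hp : F.P (ρ 0) w') : (n : ℕ) → {x : W // F.P (ρ n) x}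
  | 0 => ⟨w', hp⟩
  | n+1 => ⟨Classical.choose (F.C2 (ρ n) (ρ (n+1)) (liftAux F ρ h w' hp n).1
      (liftAux F ρ h w' hp n).2 (h n)),
    (Classical.choose_spec (F.C2 (ρ n) (ρ (n+1)) (liftAux F ρ h w' hp n).1
      (liftAux F ρ h w' hp n).2 (h n))).1⟩

lemma path_lift {W : Type} (F : BiFrame W) {ρ : ℕ → W} (h : F.IsPath ρ)
    {w' : W} (hp : F.P (ρ 0) w') :
    ∃ σ : ℕ → W, F.IsPath σ ∧ σ 0 = w' ∧ ∀ i, F.P (ρ i) (σ i) := by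
  refine ⟨fun n => (liftAux F ρ h w' hp n).1, ?_, rfl, fun i => (liftAux F ρ h w' hp i).2⟩
  intro n
  exact (Classical.choose_spec (F.C2 (ρ n) (ρ (n+1)) (liftAux F ρ h w' hp n).1
      (liftAux F ρ h w' hp n).2 (h n))).2

lemma Sat_mono {W Atom : Type} (M : BiModel W Atom) (φ : ICTL Atom) :
    ∀ w w', M.P w w' → Sat M φ w → Sat M φ w' := by
  induction φ with
  | atom p => intro w w' hp hs; exact M.V_mono w w' hp hs
  | bot => intro _ _ _ hs; exact hs
  | and φ ψ ihφ ihψ => intro w w' hp hs; exact ⟨ihφ w w' hp hs.1, ihψ w w' hp hs.2⟩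
  | or φ ψ ihφ ihψ =>
      intro w w' hp hs
      exact hs.elim (fun h => Or.inl (ihφ w w' hp h)) (fun h => Or.inr (ihψ w w' hp h))
  | impl φ ψ ihφ ihψ =>
      intro w w' hp hs v hv hφ
      exact hs v (M.P_trans w w' v hp hv) hφ
  | EX φ ih =>
      intro w w' hp hs
      obtain ⟨ρ, hρ, h0, h1⟩ := hs
      obtain ⟨σ, hσ, hσ0, hσP⟩ := path_lift M.toBiFrame hρ (h0 ▸ hp)
      exact ⟨σ, hσ, hσ0, ih (ρ 1) (σ 1) (hσP 1) h1⟩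
  | EU φ ψ ihφ ihψ =>
      intro w w' hp hs
      obtain ⟨ρ, hρ, h0, j, hj, hlt⟩ := hs
      obtain ⟨σ, hσ, hσ0, hσP⟩ := path_lift M.toBiFrame hρ (h0 ▸ hp)
      exact ⟨σ, hσ, hσ0, j, ihψ (ρ j) (σ j) (hσP j) hj,
        fun i hi => ihφ (ρ i) (σ i) (hσP i) (hlt i hi)⟩
  | ER φ ψ ihφ ihψ =>
      intro w w' hp hs
      obtain ⟨ρ, hρ, h0, hcase⟩ := hs
      obtain ⟨σ, hσ, hσ0, hσP⟩ := path_lift M.toBiFrame hρ (h0 ▸ hp)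
      refine ⟨σ, hσ, hσ0, ?_⟩
      rcases hcase with hall | ⟨j, hj, hle⟩
      · exact Or.inl fun i => ihψ (ρ i) (σ i) (hσP i) (hall i)
      · exact Or.inr ⟨j, ihφ (ρ j) (σ j) (hσP j) hj,
          fun i hi => ihψ (ρ i) (σ i) (hσP i) (hle i hi)⟩
  | AX φ ih =>
      intro w w' hp hs v hv ρ hρ h0
      exact hs v (M.P_trans w w' v hp hv) ρ hρ h0
  | AU φ ψ ihφ ihψ =>
      intro w w' hp hs v hv ρ hρ h0
      exact hs v (M.P_trans w w' v hp hv) ρ hρ h0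
  | AR φ ψ ihφ ihψ =>
      intro w w' hp hs v hv ρ hρ h0
      exact hs v (M.P_trans w w' v hp hv) ρ hρ h0

/-- Validity of `ψ ∨ (φ ∧ AX A(φ U ψ)) → A(φ U ψ)`. -/
theorem stmt7 {W Atom : Type} (M : BiModel W Atom) (w : W) (φ ψ : ICTL Atom) :
    Sat M (ICTL.impl (ICTL.or ψ (ICTL.and φ (ICTL.AX (ICTL.AU φ ψ))))
      (ICTL.AU φ ψ)) w := by
  intro w' _ h
  rcases h with hψ | ⟨hφ, hAX⟩
  · intro w'' hp ρ hρ h0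
    exact ⟨0, Sat_mono M ψ w' (ρ 0) (h0 ▸ hp) hψ, fun i hi => absurd hi (Nat.not_lt_zero i)⟩
  · intro w'' hp ρ hρ h0
    have hAU1 : Sat M (ICTL.AU φ ψ) (ρ 1) := hAX w'' hp ρ hρ h0
    have hρ' : M.toBiFrame.IsPath (fun i => ρ (i + 1)) := fun i => hρ (i + 1)
    obtain ⟨j, hj, hlt⟩ := hAU1 (ρ 1) (M.P_refl (ρ 1)) (fun i => ρ (i + 1)) hρ' rfl
    refine ⟨j + 1, hj, fun i hi => ?_⟩
    cases i with
    | zero => exact h0 ▸ Sat_mono M φ w' w'' hp hφ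
    | succ k => exact hlt k (Nat.lt_of_succ_lt_succ hi)
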